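/- Let X be a simplicial set in which every edge is invertible, let n ≥ 1 and 0 ≤ k ≤ n, and let Z be the pushout of the map b(Λ[n,k]) → b(Δ[n]) along any map b(Λ[n,k]) → X. Then every edge of Z is invertible. -/

import Mathlib

open CategoryTheory Simplicial CategoryTheory.Limits Opposite

namespace IndexedPaper
/-- The chaotic preorder on two objects. -/
inductive TwoObj : Type where
  | zero
  | one

instance : Preorder TwoObj where
  le _ _ := True
  le_refl _ := trivial
  le_trans _ _ _ _ _ := trivial

/-- `bΔ[1]`, the nerve of the groupoid with two objects and exactly one morphism
between every ordered pair of objects. -/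
def bDelta1 : SSet := CategoryTheory.nerve TwoObj

/-- `δ : Δ[1] ⟶ bΔ[1]`, classifying the morphism from the first object to the second. -/
noncomputable def deltaB : Δ[1] ⟶ bDelta1 :=
  ((@SSet.yonedaEquiv bDelta1 ⦋1⦌)).symm
    (CategoryTheory.ComposableArrows.mk₁ (homOfLE trivial : TwoObj.zero ⟶ TwoObj.one))

/-- An edge `x : Δ[1] ⟶ X` is invertible if it extends along `δ` to `bΔ[1]`. -/
def IsInvertibleEdge {X : SSet} (x : Δ[1] ⟶ X) : Prop :=
  ∃ y : bDelta1 ⟶ X, deltaB ≫ y = x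

/-- A Kan complex: every horn (`n ≥ 1`, `0 ≤ k ≤ n`) has a filler. -/
def IsKanComplex (K : SSet) : Prop :=
  ∀ ⦃n : ℕ⦄, 1 ≤ n → ∀ (k : Fin (n + 1)) (f : (Λ[n, k] : SSet) ⟶ K),
    ∃ g : Δ[n] ⟶ K, (SSet.horn n k).ι ≫ g = f

/-- A Kan fibration: right lifting property with respect to all horn inclusions
(`n ≥ 1`, `0 ≤ k ≤ n`). -/
def IsKanFibration {X Y : SSet} (p : X ⟶ Y) : Prop :=
  ∀ ⦃n : ℕ⦄, 1 ≤ n → ∀ (k : Fin (n + 1)), HasLiftingProperty ((SSet.horn n k).ι) p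

/-! ### Yoneda naturality lemmas -/

lemma yE_comp {X Y : SSet} (f : X ⟶ Y) {n : SimplexCategory}
    (g : SSet.stdSimplex.obj n ⟶ X) :
    (@SSet.yonedaEquiv Y n) (g ≫ f) = f.app (op n) ((@SSet.yonedaEquiv X n) g) := rfl

lemma yE_symm_comp {X Y : SSet} (f : X ⟶ Y) {n : SimplexCategory} (x : X.obj (op n)) :
    ((@SSet.yonedaEquiv Y n)).symm (f.app (op n) x) = ((@SSet.yonedaEquiv X n)).symm x ≫ f := by
  apply ((@SSet.yonedaEquiv Y n)).injective
  rw [Equiv.apply_symm_apply, yE_comp, Equiv.apply_symm_apply]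

lemma yE_symm_map {X : SSet} {m n : SimplexCategory} (f : m ⟶ n) (x : X.obj (op n)) :
    ((@SSet.yonedaEquiv X m)).symm (X.map f.op x) =
      SSet.stdSimplex.map f ≫ ((@SSet.yonedaEquiv X n)).symm x := by
  exact (SSet.yonedaEquiv_symm_naturality_left f x).symm

/-! ### The functor `G` -/

/-- The set of simplices of `X` all of whose edges are invertible. -/
def GSet (X : SSet) (n : SimplexCategoryᵒᵖ) : Set (X.obj n) :=
  {x | ∀ e : Δ[1] ⟶ SSet.stdSimplex.obj n.unop,
    IsInvertibleEdge (e ≫ ((@SSet.yonedaEquiv X n.unop)).symm x)}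

/-- `G X`, the simplicial subset of `X` consisting of the simplices all of whose
edges are invertible. -/
def GObj (X : SSet) : SSet where
  obj n := GSet X n
  map := fun {n m} f => TypeCat.ofHom fun x => ⟨X.map f x.1, by
    intro e
    have h := x.2 (e ≫ SSet.stdSimplex.map f.unop)
    have heq : ((@SSet.yonedaEquiv X m.unop)).symm (X.map f x.1) =
        SSet.stdSimplex.map f.unop ≫ ((@SSet.yonedaEquiv X n.unop)).symm x.1 :=
      yE_symm_map f.unop x.1
    rw [heq, ← Category.assoc]
    exact h⟩
  map_id n := by
    ext x
    exact FunctorToTypes.map_id_apply X x.1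
  map_comp f g := by
    ext x
    exact FunctorToTypes.map_comp_apply X f g x.1

/-- `ε_X : G X ⟶ X`, the inclusion. -/
def epsilon (X : SSet) : GObj X ⟶ X where
  app n := TypeCat.ofHom fun x => x.1
  naturality _ _ _ := rfl

/-- The functorial action of `G` on a map of simplicial sets. -/
def Gmap {X Y : SSet} (f : X ⟶ Y) : GObj X ⟶ GObj Y where
  app n := TypeCat.ofHom fun x => ⟨f.app n x.1, by
    intro e
    obtain ⟨y, hy⟩ := x.2 e
    refine ⟨y ≫ f, ?_⟩
    have : ((@SSet.yonedaEquiv Y n.unop)).symm (f.app n x.1) =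
        ((@SSet.yonedaEquiv X n.unop)).symm x.1 ≫ f := yE_symm_comp f x.1
    simp only [this, ← Category.assoc, hy]⟩
  naturality n m g := by
    ext x
    apply Subtype.ext
    exact FunctorToTypes.naturality f g x.1


/-! ### Homotopy category -/


structure HoObj (X : SSet.{0}) where
  pt : X _⦋0⦌

def edgeSrc {X : SSet.{0}} (e : X _⦋1⦌) : X _⦋0⦌ := X.map (SimplexCategory.δ (1 : Fin 2)).op e

def edgeTgt {X : SSet.{0}} (e : X _⦋1⦌) : X _⦋0⦌ := X.map (SimplexCategory.δ (0 : Fin 2)).op e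

instance hoQuiver (X : SSet.{0}) : Quiver (HoObj X) where
  Hom a b := {e : X _⦋1⦌ // edgeSrc e = a.pt ∧ edgeTgt e = b.pt}

inductive HoRel (X : SSet.{0}) : ∀ ⦃a b : Paths (HoObj X)⦄, (a ⟶ b) → (a ⟶ b) → Prop where
  | comp (σ : X _⦋2⦌) {a b c : HoObj X} (f : a ⟶ b) (g : b ⟶ c) (h : a ⟶ c)
      (hf : f.1 = X.map (SimplexCategory.δ (2 : Fin 3)).op σ)
      (hg : g.1 = X.map (SimplexCategory.δ (0 : Fin 3)).op σ)
      (hh : h.1 = X.map (SimplexCategory.δ (1 : Fin 3)).op σ) :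
      HoRel X (f.toPath ≫ g.toPath) h.toPath
| id {a : HoObj X} (f : a ⟶ a)
      (hf : f.1 = X.map (SimplexCategory.σ (0 : Fin 1)).op a.pt) :
      HoRel X f.toPath (𝟙 ((Paths.of _).obj a))

instance (X : SSet.{0}) : Category (CategoryTheory.Quotient (HoRel X)) :=
  CategoryTheory.Quotient.category _

abbrev HoCat (X : SSet.{0}) := CategoryTheory.Quotient (HoRel X)

/-- The prefunctor on vertices and edges induced by a simplicial map. -/
def hoPre {X Y : SSet.{0}} (f : X ⟶ Y) : HoObj X ⥤q HoObj Y where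
  obj a := ⟨f.app _ a.pt⟩
  map {a b} e := ⟨f.app _ e.1, by
    constructor
    · show Y.map _ _ = _
      rw [← FunctorToTypes.naturality]
      exact congrArg (f.app _) e.2.1
    · show Y.map _ _ = _
      rw [← FunctorToTypes.naturality]
      exact congrArg (f.app _) e.2.2⟩

/-- Lift to the path category. -/
def hoLift {X Y : SSet.{0}} (f : X ⟶ Y) : Paths (HoObj X) ⥤ HoCat Y :=
  Paths.lift ((hoPre f).comp ((Paths.of _).comp (Quotient.functor (HoRel Y)).toPrefunctor))

lemma hoLift_toPath {X Y : SSet.{0}} (f : X ⟶ Y) {a b : HoObj X} (e : a ⟶ b) :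
    (hoLift f).map e.toPath =
      (Quotient.functor (HoRel Y)).map ((hoPre f).map e).toPath :=
  Paths.lift_toPath _ _

/-- The induced functor on homotopy categories. -/
def hoMap {X Y : SSet.{0}} (f : X ⟶ Y) : HoCat X ⥤ HoCat Y :=
  CategoryTheory.Quotient.lift (HoRel X) (hoLift f) (by
    intro a b g₁ g₂ h
    induction h with
    | comp σ p q r hp hq hr =>
      erw [Functor.map_comp, hoLift_toPath, hoLift_toPath, hoLift_toPath,
        ← Functor.map_comp]
      apply CategoryTheory.Quotient.sound _
      apply HoRel.comp (f.app _ σ)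
      · show f.app _ p.1 = _
        rw [hp]; exact FunctorToTypes.naturality f _ σ
      · show f.app _ q.1 = _
        rw [hq]; exact FunctorToTypes.naturality f _ σ
      · show f.app _ r.1 = _
        rw [hr]; exact FunctorToTypes.naturality f _ σ
    | id p hp =>
      have h1 : (Quotient.functor (HoRel Y)).map ((hoPre f).map p).toPath =
          (Quotient.functor (HoRel Y)).map (𝟙 ((Paths.of _).obj ((hoPre f).obj _))) := by
        apply CategoryTheory.Quotient.sound
        apply HoRel.id
        show f.app _ p.1 = _
        rw [hp]; exact FunctorToTypes.naturality f _ _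
      rw [hoLift_toPath, h1, CategoryTheory.Functor.map_id]
      exact ((hoLift f).map_id _).symm)



noncomputable instance : MonoidalClosed SSet.{0} :=
  inferInstanceAs (MonoidalClosed (SimplexCategoryᵒᵖ ⥤ Type 0))

/-- A map `f : A ⟶ B` of simplicial sets is a categorical equivalence if, for every
quasicategory `Q`, the induced functor `ho(Q^B) ⥤ ho(Q^A)` is an equivalence of categories. -/
def IsCatEquiv {A B : SSet.{0}} (f : A ⟶ B) : Prop :=
  ∀ (Q : SSet.{0}), SSet.Quasicategory Q →
    (hoMap ((MonoidalClosed.pre f).app Q)).IsEquivalence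

/-- A categorical fibration (isofibration): right lifting property with respect to
monomorphisms that are categorical equivalences. -/
def IsCatFibration {X Y : SSet.{0}} (p : X ⟶ Y) : Prop :=
  ∀ ⦃A B : SSet.{0}⦄ (i : A ⟶ B), Mono i → IsCatEquiv i → HasLiftingProperty i p


/-! ### b construction -/


instance horn_mono (n : ℕ) (k : Fin (n+1)) : Mono ((SSet.horn n k).ι) := by
  have : ∀ m, Mono (((SSet.horn n k).ι).app m) := by
    intro m
    rw [CategoryTheory.mono_iff_injective]
    exact fun a b h => Subtype.ext h
  exact NatTrans.mono_of_mono_app _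

/-- A degenerate edge. -/
def IsDegenEdge (X : SSet.{0}) (e : X.obj (op ⦋1⦌)) : Prop :=
  ∃ v : X.obj (op ⦋0⦌), e = X.map (SimplexCategory.σ (0 : Fin 1)).op v

/-- The type of nondegenerate edges of `X`. -/
def NdEdge (X : SSet.{0}) : Type := {e : X.obj (op ⦋1⦌) // ¬ IsDegenEdge X e}

lemma mono_ndEdge {X Y : SSet.{0}} (f : X ⟶ Y) [Mono f] {e : X.obj (op ⦋1⦌)}
    (he : ¬ IsDegenEdge X e) : ¬ IsDegenEdge Y (f.app _ e) := by
  rintro ⟨v, hv⟩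
  apply he
  refine ⟨X.map (SimplexCategory.δ (0 : Fin 2)).op e, ?_⟩
  have hinj : Function.Injective (f.app (op ⦋1⦌)) := by
    rw [← CategoryTheory.mono_iff_injective]
    infer_instance
  have hds : SimplexCategory.δ (0 : Fin 2) ≫ SimplexCategory.σ (0 : Fin 1) = 𝟙 (⦋0⦌ : SimplexCategory) :=
    SimplexCategory.δ_comp_σ_self' (by rfl)
  have hv2 : v = Y.map (SimplexCategory.δ (0 : Fin 2)).op (f.app _ e) := by
    rw [hv, ← FunctorToTypes.map_comp_apply, ← op_comp, hds, op_id,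
      FunctorToTypes.map_id_apply]
  have key : f.app _ (X.map (SimplexCategory.σ (0 : Fin 1)).op
      (X.map (SimplexCategory.δ (0 : Fin 2)).op e)) = f.app _ e := by
    rw [FunctorToTypes.naturality, FunctorToTypes.naturality, ← hv2, ← hv]
  exact (hinj key).symm



/-- The canonical map `∐_S Δ[1] ⟶ X` indexed by nondegenerate edges. -/
noncomputable def ndToX (X : SSet.{0}) : (∐ fun _ : NdEdge X => Δ[1]) ⟶ X :=
  Sigma.desc fun s => ((@SSet.yonedaEquiv X ⦋1⦌)).symm s.1

/-- The coproduct of copies of `δ : Δ[1] ⟶ bΔ[1]`. -/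
noncomputable def ndToB (X : SSet.{0}) :
    (∐ fun _ : NdEdge X => Δ[1]) ⟶ (∐ fun _ : NdEdge X => bDelta1) :=
  Limits.Sigma.map fun _ => deltaB

/-- `b X`: the pushout of `∐_S Δ[1] ⟶ X` along `∐_S δ`. -/
noncomputable def bObj (X : SSet.{0}) : SSet := pushout (ndToX X) (ndToB X)

/-- The canonical map `X ⟶ b X`. -/
noncomputable def bUnit (X : SSet.{0}) : X ⟶ bObj X := pushout.inl _ _

/-- The map `b X ⟶ b Y` induced by a monomorphism `X ⟶ Y`. -/
noncomputable def bMap {X Y : SSet.{0}} (f : X ⟶ Y) [Mono f] : bObj X ⟶ bObj Y :=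
  pushout.map (ndToX X) (ndToB X) (ndToX Y) (ndToB Y) f
    (Sigma.desc fun s => Sigma.ι (fun _ : NdEdge Y => bDelta1)
      (⟨f.app _ s.1, mono_ndEdge f s.2⟩ : NdEdge Y))
    (Sigma.desc fun s => Sigma.ι (fun _ : NdEdge Y => Δ[1])
      (⟨f.app _ s.1, mono_ndEdge f s.2⟩ : NdEdge Y))
    (by
      apply Sigma.hom_ext
      intro s
      simp only [ndToX, colimit.ι_desc_assoc, Cofan.mk_ι_app, colimit.ι_desc]
      exact (yE_symm_comp f s.1).symm)
    (by
      apply Sigma.hom_ext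
      intro s
      simp [ndToB, ndToX, Limits.Sigma.map, ι_colimMap])


lemma bUnit_naturality {X Y : SSet.{0}} (f : X ⟶ Y) [Mono f] :
    bUnit X ≫ bMap f = f ≫ bUnit Y := by
  simp only [bUnit, bMap, pushout.map]
  exact pushout.inl_desc _ _ _



/-! Every simplex of a colimit of simplicial sets comes from one of the pieces, and maps send
invertible edges to invertible edges, so it suffices that all edges of `b(Λ[n,k])`, `b(Δ[n])` and
`X` be invertible. In `b(Y)`, a degenerate edge factors through `Δ[0]`, a nondegenerate edge of `Y`
has been made the image of `δ`, and every edge of `bΔ[1]` is invertible since `bΔ[1]` is the nerve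
of a chaotic category. -/

lemma IsInvertibleEdge.comp {X Y : SSet} {x : Δ[1] ⟶ X} (hx : IsInvertibleEdge x) (f : X ⟶ Y) :
    IsInvertibleEdge (x ≫ f) := by
  obtain ⟨y, rfl⟩ := hx
  exact ⟨y ≫ f, (Category.assoc _ _ _).symm⟩

lemma isInvertibleEdge_comp_stdSimplex_zero {X : SSet.{0}} (p : Δ[1] ⟶ Δ[0]) (v : Δ[0] ⟶ X) :
    IsInvertibleEdge (p ≫ v) :=
  ⟨SSet.stdSimplex.isTerminalObj₀.from bDelta1 ≫ v, by
    rw [← Category.assoc, SSet.stdSimplex.isTerminalObj₀.hom_ext (deltaB ≫ _) p]⟩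

lemma isInvertibleEdge_of_isDegenEdge {X : SSet.{0}} {e : X _⦋1⦌} (he : IsDegenEdge X e) :
    IsInvertibleEdge (SSet.yonedaEquiv.symm e) := by
  obtain ⟨v, rfl⟩ := he
  rw [← SSet.yonedaEquiv_symm_naturality_left]
  exact isInvertibleEdge_comp_stdSimplex_zero _ _

/-- Every edge `(a, b)` of `bΔ[1]` is the image of `δ` under the nerve of `0 ↦ a, 1 ↦ b`. -/
lemma isInvertibleEdge_bDelta1 (x : Δ[1] ⟶ bDelta1) : IsInvertibleEdge x := by
  let c : ComposableArrows TwoObj 1 := SSet.yonedaEquiv x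
  let F : TwoObj ⥤ TwoObj :=
    Monotone.functor (f := fun t => match t with
      | .zero => c.obj 0
      | .one => c.obj 1) fun _ _ _ => trivial
  have hδ : @SSet.yonedaEquiv bDelta1 ⦋1⦌ deltaB =
      ComposableArrows.mk₁ (homOfLE trivial : TwoObj.zero ⟶ TwoObj.one) :=
    Equiv.apply_symm_apply _ _
  refine ⟨nerveMap F, (@SSet.yonedaEquiv bDelta1 ⦋1⦌).injective ?_⟩
  change (nerveMap F).app _ (@SSet.yonedaEquiv bDelta1 ⦋1⦌ deltaB) = c
  rw [hδ, nerveMap_app_mk₁]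
  exact ComposableArrows.ext₁ rfl rfl (Subsingleton.elim _ _)

lemma exists_comp_ι_app_eq_of_isColimit {J : Type*} [Category J]
    [HasColimitsOfShape J (Type u)] {F : J ⥤ SSet.{u}} {c : Cocone F} (hc : IsColimit c)
    {m : SimplexCategory} (x : SSet.stdSimplex.obj m ⟶ c.pt) :
    ∃ j, ∃ y : SSet.stdSimplex.obj m ⟶ F.obj j, y ≫ c.ι.app j = x := by
  obtain ⟨j, y, hy⟩ := Types.jointly_surjective_of_isColimit
    (isColimitOfPreserves ((evaluation _ _).obj (op m)) hc) (SSet.yonedaEquiv x)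
  exact ⟨j, SSet.yonedaEquiv.symm y,
    SSet.yonedaEquiv.injective (by simpa [SSet.yonedaEquiv_comp] using hy)⟩

lemma isInvertibleEdge_of_isColimit {J : Type*} [Category J]
    [HasColimitsOfShape J (Type 0)] {F : J ⥤ SSet.{0}} {c : Cocone F} (hc : IsColimit c)
    (hF : ∀ j (x : Δ[1] ⟶ F.obj j), IsInvertibleEdge x) (x : Δ[1] ⟶ c.pt) :
    IsInvertibleEdge x := by
  obtain ⟨j, y, rfl⟩ := exists_comp_ι_app_eq_of_isColimit hc x
  exact (hF j y).comp _

lemma deltaB_comp_ι_comp_inr (Y : SSet.{0}) (s : NdEdge Y) :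
    deltaB ≫ Sigma.ι (fun _ : NdEdge Y => bDelta1) s ≫ pushout.inr (ndToX Y) (ndToB Y) =
      SSet.yonedaEquiv.symm s.1 ≫ bUnit Y := by
  unfold bUnit
  have h := Sigma.ι (fun _ : NdEdge Y => Δ[1]) s ≫= pushout.condition (f := ndToX Y) (g := ndToB Y)
  simp only [ndToX, ndToB, colimit.ι_desc_assoc, Cofan.mk_ι_app, Limits.Sigma.map,
    ι_colimMap_assoc, Discrete.natTrans_app] at h
  exact h.symm

lemma isInvertibleEdge_comp_bUnit {Y : SSet.{0}} (y : Δ[1] ⟶ Y) :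
    IsInvertibleEdge (y ≫ bUnit Y) := by
  rw [← SSet.yonedaEquiv.symm_apply_apply y]
  by_cases hy : IsDegenEdge Y (SSet.yonedaEquiv y)
  · exact (isInvertibleEdge_of_isDegenEdge hy).comp _
  · exact ⟨_, deltaB_comp_ι_comp_inr Y ⟨_, hy⟩⟩

lemma isInvertibleEdge_bObj {Y : SSet.{0}} (x : Δ[1] ⟶ bObj Y) : IsInvertibleEdge x := by
  obtain ⟨j, y, rfl⟩ := exists_comp_ι_app_eq_of_isColimit (colimit.isColimit _) x
  rcases j with _ | _ | _
  · have hw : ndToX Y ≫ bUnit Y = (colimit.cocone (span (ndToX Y) (ndToB Y))).ι.app none := by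
      exact colimit.w (span (ndToX Y) (ndToB Y)) WalkingSpan.Hom.fst
    exact hw ▸ Category.assoc y _ _ ▸ isInvertibleEdge_comp_bUnit (y ≫ ndToX Y)
  · exact isInvertibleEdge_comp_bUnit y
  · exact (isInvertibleEdge_of_isColimit (colimit.isColimit _)
      (fun _ => isInvertibleEdge_bDelta1) y).comp _

theorem pushout_b_horn_preserves_invertible_edges_general {X : SSet.{0}}
    (hX : ∀ e : Δ[1] ⟶ X, IsInvertibleEdge e) (n : ℕ) (k : Fin (n + 1))
    (u : bObj (SSet.horn n k : SSet) ⟶ X)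
    (e : Δ[1] ⟶ pushout (bMap ((SSet.horn n k).ι)) u) :
    IsInvertibleEdge e := by
  refine isInvertibleEdge_of_isColimit (colimit.isColimit _) ?_ e
  rintro (_ | _ | _)
  · exact isInvertibleEdge_bObj
  · exact isInvertibleEdge_bObj
  · exact hX

/-- Pushouts of `b(Λ[n,k]) ⟶ b(Δ[n])` preserve the property that every
edge is invertible. -/
theorem pushout_b_horn_preserves_invertible_edges {X : SSet.{0}}
    (hX : ∀ e : Δ[1] ⟶ X, IsInvertibleEdge e) (n : ℕ) (hn : 1 ≤ n) (k : Fin (n + 1))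
    (u : bObj (SSet.horn n k : SSet) ⟶ X)
    (e : Δ[1] ⟶ pushout (bMap ((SSet.horn n k).ι)) u) :
    IsInvertibleEdge e :=
  pushout_b_horn_preserves_invertible_edges_general hX n k u e

end IndexedPaper
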